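/- Let n ≥ 1 and let a₁, …, a_n ∈ ℂ be such that Σ_{i∈T} a_i ≠ 0 for every nonempty subset T ⊆ {1, …, n}. Let A ⊆ ℂ[z₁, …, z_n] be the ℂ-subalgebra generated by the deformed Newton sums p_m = a₁ z₁^m + … + a_n z_n^m for all m ≥ 1. Then ℂ[z₁, …, z_n] is a finitely generated A-module. -/

import Mathlib

/-!
The deformed Newton sums are homogeneous of positive degree, and their only common zero is the
origin: if `∑ a_i x_i^m = 0` for all `m ≥ 1`, grouping equal coordinates gives
`∑_w (c_w w) w^k = 0` for all `k`, where `c_w` is the sum of the `a_i` with `x_i = w`; by the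
linear independence of the characters `k ↦ w^k` every `c_w w` vanishes, and `c_w ≠ 0` forces
`w = 0`. By the Nullstellensatz each variable is then nilpotent modulo the ideal `I` generated by
the Newton sums, so only finitely many monomials lie outside `I`. A graded Nakayama argument
(induction on the degree, writing the degree-`d` part of `∑ q_s s ∈ I` as
`∑ (degree-(d - deg s) part of q_s) s`) shows that these monomials span the polynomial ring over
the algebra generated by the Newton sums.
-/

open Finset

theorem Finset.eq_zero_of_forall_sum_mul_pow_eq_zero {R : Type*} [CommRing R]
    [IsDomain R] {W : Finset R} {c : R → R} (h : ∀ k : ℕ, ∑ w ∈ W, c w * w ^ k = 0) :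
    ∀ w ∈ W, c w = 0 := by
  have hli : LinearIndependent R fun w : R => ⇑(powersHom R w) :=
    (linearIndependent_monoidHom (Multiplicative ℕ) R).comp _ (powersHom R).injective
  refine linearIndependent_iff'.mp hli W c (funext fun k => ?_)
  simpa [mul_comm] using h k.toAdd

theorem eq_zero_of_forall_weighted_power_sum_eq_zero {R ι : Type*} [CommRing R] [IsDomain R]
    [Fintype ι] {a x : ι → R} (ha : ∀ T : Finset ι, T.Nonempty → ∑ i ∈ T, a i ≠ 0)
    (hx : ∀ m, 1 ≤ m → ∑ i, a i * x i ^ m = 0) : x = 0 := by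
  classical
  set c : R → R := fun w => ∑ i with x i = w, a i
  have hc : ∀ k : ℕ, ∑ w ∈ univ.image x, c w * w * w ^ k = 0 := fun k => by
    rw [← hx (k + 1) k.succ_pos,
      ← sum_fiberwise_of_maps_to fun i _ => mem_image_of_mem x (mem_univ i)]
    refine sum_congr rfl fun w _ => ?_
    rw [mul_assoc, ← pow_succ', sum_mul]
    exact sum_congr rfl fun i hi => by rw [(mem_filter.mp hi).2]
  funext j
  by_contra hj
  have := Finset.eq_zero_of_forall_sum_mul_pow_eq_zero hc (x j) (mem_image_of_mem x (mem_univ j))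
  exact ha _ ⟨j, by simp⟩ ((mul_eq_zero.mp this).resolve_right hj)

namespace MvPolynomial

variable {σ R : Type*} [CommSemiring R]

section

attribute [local instance] gradedAlgebra

theorem homogeneousComponent_mul_of_isHomogeneous_right {p : MvPolynomial σ R} {m : ℕ}
    (hp : p.IsHomogeneous m) (q : MvPolynomial σ R) (d : ℕ) :
    homogeneousComponent d (q * p) = if m ≤ d then homogeneousComponent (d - m) q * p else 0 := by
  simp only [← decomposition.decompose'_apply]
  exact DirectSum.coe_decompose_mul_of_right_mem (homogeneousSubmodule σ R) d (a := q)
    ((mem_homogeneousSubmodule m p).mpr hp)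

end

variable {S : Set (MvPolynomial σ R)} (M : Submodule (Algebra.adjoin R S) (MvPolynomial σ R))

theorem homogeneousComponent_mem_of_mem_span (hS : ∀ s ∈ S, ∃ m, 0 < m ∧ s.IsHomogeneous m)
    {d : ℕ} (hlow : ∀ e < d, ∀ p : MvPolynomial σ R, p.IsHomogeneous e → p ∈ M)
    {x : MvPolynomial σ R} (hx : x ∈ Ideal.span S) : homogeneousComponent d x ∈ M := by
  -- strengthened so that the `smul` case of span induction goes through
  suffices ∀ q, homogeneousComponent d (q * x) ∈ M by simpa using this 1
  induction hx using Submodule.span_induction with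
  | mem s hs =>
    intro q
    obtain ⟨m, hm, hs_hom⟩ := hS s hs
    rw [homogeneousComponent_mul_of_isHomogeneous_right hs_hom]
    split_ifs with hmd
    · rw [mul_comm]
      exact M.smul_mem (⟨s, Algebra.subset_adjoin hs⟩ : Algebra.adjoin R S)
        (hlow (d - m) (by omega) _ (homogeneousComponent_isHomogeneous _ _))
    · exact M.zero_mem
  | zero => simp
  | add x y _ _ hx hy => intro q; rw [mul_add, map_add]; exact M.add_mem (hx q) (hy q)
  | smul r x _ hx => intro q; rw [smul_eq_mul, ← mul_assoc]; exact hx (q * r)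

theorem submodule_eq_top_of_monomial_mem (hS : ∀ s ∈ S, ∃ m, 0 < m ∧ s.IsHomogeneous m)
    (hM : ∀ v, monomial v (1 : R) ∉ Ideal.span S → monomial v 1 ∈ M) : M = ⊤ := by
  have hhom : ∀ d, ∀ p : MvPolynomial σ R, p.IsHomogeneous d → p ∈ M := by
    intro d
    induction d using Nat.strong_induction_on with
    | _ d IH =>
    intro p hp
    rw [p.as_sum]
    refine M.sum_mem fun v hv => ?_
    rw [← mul_one (coeff v p), ← smul_eq_mul, ← smul_monomial]
    refine M.smul_of_tower_mem _ ?_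
    by_cases hv_span : monomial v (1 : R) ∈ Ideal.span S
    · have hv_deg : v.degree = d := by
        simpa [Finsupp.degree_eq_weight_one, Pi.one_def] using hp (mem_support_iff.mp hv)
      have := homogeneousComponent_mem_of_mem_span M hS IH hv_span
      rwa [homogeneousComponent_eq_self (isHomogeneous_monomial 1 hv_deg)] at this
    · exact hM v hv_span
  refine Submodule.eq_top_iff'.mpr fun p => ?_
  rw [← sum_homogeneousComponent p]
  exact M.sum_mem fun d _ => hhom d _ (homogeneousComponent_isHomogeneous d p)

theorem finite_adjoin_of_finite_setOf_monomial_notMem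
    (hS : ∀ s ∈ S, ∃ m, 0 < m ∧ s.IsHomogeneous m)
    (hfin : {v | monomial v (1 : R) ∉ Ideal.span S}.Finite) :
    Module.Finite (Algebra.adjoin R S) (MvPolynomial σ R) :=
  ⟨Submodule.fg_def.mpr ⟨_, hfin.image fun v => monomial v 1,
    submodule_eq_top_of_monomial_mem _ hS fun v hv => Submodule.subset_span ⟨v, hv, rfl⟩⟩⟩

theorem finite_setOf_monomial_notMem [Finite σ] {I : Ideal (MvPolynomial σ R)}
    (hI : ∀ i, X i ∈ I.radical) : {v | monomial v (1 : R) ∉ I}.Finite := by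
  classical
  choose k hk using hI
  refine (Set.finite_Icc 0 (Finsupp.equivFunOnFinite.symm k)).subset
    fun v hv => ⟨zero_le, fun i => ?_⟩
  by_contra hi
  refine hv (Ideal.mem_of_dvd _ ?_ (hk i))
  rw [X_pow_eq_monomial, monomial_dvd_monomial]
  exact ⟨Or.inr (Finsupp.single_le_iff.mpr (by simpa using (not_le.mp hi).le)), dvd_rfl⟩

theorem X_mem_radical_of_zeroLocus_subset {k : Type*} [Field k] [IsAlgClosed k] [Finite σ]
    {I : Ideal (MvPolynomial σ k)} (h : zeroLocus k I ⊆ {0}) (i : σ) : X i ∈ I.radical := by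
  rw [← vanishingIdeal_zeroLocus_eq_radical (K := k), mem_vanishingIdeal_iff]
  intro x hx
  rw [Set.mem_singleton_iff.mp (h hx)]
  simp

end MvPolynomial

open MvPolynomial in
theorem polynomialRing_finite_over_deformed_newton (n : ℕ) (a : Fin n → ℂ)
    (ha : ∀ T : Finset (Fin n), T.Nonempty → ∑ i ∈ T, a i ≠ 0) :
    Module.Finite
      (Algebra.adjoin ℂ {p : MvPolynomial (Fin n) ℂ |
        ∃ m : ℕ, 1 ≤ m ∧ p = ∑ i, MvPolynomial.C (a i) * MvPolynomial.X i ^ m})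
      (MvPolynomial (Fin n) ℂ) := by
  set S := {p : MvPolynomial (Fin n) ℂ |
    ∃ m : ℕ, 1 ≤ m ∧ p = ∑ i, MvPolynomial.C (a i) * MvPolynomial.X i ^ m}
  have hS : ∀ s ∈ S, ∃ m, 0 < m ∧ s.IsHomogeneous m := by
    rintro _ ⟨m, hm, rfl⟩
    exact ⟨m, hm, IsHomogeneous.sum _ _ _ fun i _ => isHomogeneous_C_mul_X_pow (a i) i m⟩
  have hzero : zeroLocus ℂ (Ideal.span S) ⊆ {0} := fun x hx =>
    eq_zero_of_forall_weighted_power_sum_eq_zero ha fun m hm => by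
      simpa using mem_zeroLocus_iff.mp hx _ (Ideal.subset_span ⟨m, hm, rfl⟩)
  exact finite_adjoin_of_finite_setOf_monomial_notMem hS
    (finite_setOf_monomial_notMem (X_mem_radical_of_zeroLocus_subset hzero))
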